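/- The difference of expected second σ²-derivatives of the noisy- and true-covariate negative log-likelihoods at the true parameter is the explicit scalar: E[∂²L*/∂(σ²)² (θ0)] − E[∂²L/∂(σ²)² (θ0)] = λx² (β02ᵀ β02) tr(Ω0⁻³). -/

import Mathlib

/-! As a function of `σ²` alone, `L = c + ½ log det (σ² I + A) + ½ rᵀ (σ² I + A)⁻¹ r` with
`A = λ² S₀ S₀ᵀ` positive semidefinite and `r = S₀ Y* − X β₀`, so `∂²L/∂(σ²)²(θ₀)` is the same
log-det term plus `rᵀ Ω₀⁻³ r`; `L*` differs only in the residual `r* = r − Ex β₀₂`. Both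
residuals are linear in the noise vector `(E, ε, Ex)`: `r = C η` and `r* = (C − B) η`, and for
independent centred noise `E[(Cη)ᵀ M (Cη)] = tr (M C D Cᵀ)` with `D` the diagonal of variances.
`B` lives on the `Ex` columns, where `C` vanishes, so the cross terms drop out and the difference
of expectations is `tr (M B D Bᵀ) = λx² ‖β₀₂‖² tr M` with `M = Ω₀⁻³`.
-/

open MeasureTheory ProbabilityTheory Matrix
open scoped Matrix

namespace PSAR

/-- `S(ρ) = I_N − ρ W`. -/
noncomputable def Smat {N : ℕ} (W : Matrix (Fin N) (Fin N) ℝ) (ρ : ℝ) :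
    Matrix (Fin N) (Fin N) ℝ :=
  1 - ρ • W

/-- `Ω(ρ, σ²) = σ² I_N + λ² S(ρ) S(ρ)ᵀ`. -/
noncomputable def Omat {N : ℕ} (W : Matrix (Fin N) (Fin N) ℝ) (lam2 ρ σ2 : ℝ) :
    Matrix (Fin N) (Fin N) ℝ :=
  σ2 • (1 : Matrix (Fin N) (Fin N) ℝ) + lam2 • (Smat W ρ * (Smat W ρ)ᵀ)

/-- `𝕎S(ρ) = W S(ρ)ᵀ + S(ρ) Wᵀ`. -/
noncomputable def WSmat {N : ℕ} (W : Matrix (Fin N) (Fin N) ℝ) (ρ : ℝ) :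
    Matrix (Fin N) (Fin N) ℝ :=
  W * (Smat W ρ)ᵀ + Smat W ρ * Wᵀ

/-- `𝕎(ρ) = Wᵀ S(ρ) + S(ρ)ᵀ W` (least squares version). -/
noncomputable def WLSmat {N : ℕ} (W : Matrix (Fin N) (Fin N) ℝ) (ρ : ℝ) :
    Matrix (Fin N) (Fin N) ℝ :=
  Wᵀ * Smat W ρ + (Smat W ρ)ᵀ * W

/-- The negative log-likelihood
`L(θ) = −log det S(ρ) + (1/2) log det Ω(ρ,σ²) + (1/2)(S(ρ)Ys − Xβ)ᵀ Ω(ρ,σ²)⁻¹ (S(ρ)Ys − Xβ)`. -/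
noncomputable def nll {N p1 p2 : ℕ} (W : Matrix (Fin N) (Fin N) ℝ) (lam2 : ℝ)
    (X : Matrix (Fin N) (Fin p1 ⊕ Fin p2) ℝ) (Ys : Fin N → ℝ)
    (ρ : ℝ) (β : Fin p1 ⊕ Fin p2 → ℝ) (σ2 : ℝ) : ℝ :=
  - Real.log (Smat W ρ).det + (1 / 2) * Real.log (Omat W lam2 ρ σ2).det
    + (1 / 2) * ((Smat W ρ *ᵥ Ys - X *ᵥ β) ⬝ᵥ
        ((Omat W lam2 ρ σ2)⁻¹ *ᵥ (Smat W ρ *ᵥ Ys - X *ᵥ β)))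

/-- Diagonal matrix `d(ρ)` with `d(ρ)_{ii} = 1/(S(ρ)ᵀ S(ρ))_{ii}`. -/
noncomputable def dmat {N : ℕ} (W : Matrix (Fin N) (Fin N) ℝ) (ρ : ℝ) :
    Matrix (Fin N) (Fin N) ℝ :=
  Matrix.diagonal fun i => ((((Smat W ρ)ᵀ * Smat W ρ) i i)⁻¹)

/-- Entrywise first derivative `ḋ(ρ)` of `d(ρ)` in `ρ`. -/
noncomputable def dmatDot {N : ℕ} (W : Matrix (Fin N) (Fin N) ℝ) (ρ : ℝ) :
    Matrix (Fin N) (Fin N) ℝ :=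
  Matrix.diagonal fun i => deriv (fun r => ((((Smat W r)ᵀ * Smat W r) i i)⁻¹)) ρ

/-- Entrywise second derivative `d̈(ρ)` of `d(ρ)` in `ρ`. -/
noncomputable def dmatDDot {N : ℕ} (W : Matrix (Fin N) (Fin N) ℝ) (ρ : ℝ) :
    Matrix (Fin N) (Fin N) ℝ :=
  Matrix.diagonal fun i => deriv (deriv (fun r => ((((Smat W r)ᵀ * Smat W r) i i)⁻¹))) ρ

/-- Least squares objective `L_LS(γ) = ‖d(ρ) S(ρ)ᵀ (S(ρ)Y − Xβ)‖²`. -/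
noncomputable def lsObj {N p1 p2 : ℕ} (W : Matrix (Fin N) (Fin N) ℝ)
    (X : Matrix (Fin N) (Fin p1 ⊕ Fin p2) ℝ) (Y : Fin N → ℝ)
    (ρ : ℝ) (β : Fin p1 ⊕ Fin p2 → ℝ) : ℝ :=
  ((dmat W ρ * (Smat W ρ)ᵀ) *ᵥ (Smat W ρ *ᵥ Y - X *ᵥ β)) ⬝ᵥ
    ((dmat W ρ * (Smat W ρ)ᵀ) *ᵥ (Smat W ρ *ᵥ Y - X *ᵥ β))

/-- Observed response `Y* = S0⁻¹(Xβ0 + E) + ε`. -/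
noncomputable def Yobs {N p1 p2 : ℕ} (W : Matrix (Fin N) (Fin N) ℝ) (ρ0 : ℝ)
    (X : Matrix (Fin N) (Fin p1 ⊕ Fin p2) ℝ) (β0 : Fin p1 ⊕ Fin p2 → ℝ)
    (E ε : Fin N → ℝ) : Fin N → ℝ :=
  (Smat W ρ0)⁻¹ *ᵥ (X *ᵥ β0 + E) + ε

/-- True response `Y = S0⁻¹(Xβ0 + E)`. -/
noncomputable def Ytrue {N p1 p2 : ℕ} (W : Matrix (Fin N) (Fin N) ℝ) (ρ0 : ℝ)
    (X : Matrix (Fin N) (Fin p1 ⊕ Fin p2) ℝ) (β0 : Fin p1 ⊕ Fin p2 → ℝ)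
    (E : Fin N → ℝ) : Fin N → ℝ :=
  (Smat W ρ0)⁻¹ *ᵥ (X *ᵥ β0 + E)

/-- Observed covariates `X* = (X1, X2 + Ex)`. -/
noncomputable def Xobs {N p1 p2 : ℕ} (X : Matrix (Fin N) (Fin p1 ⊕ Fin p2) ℝ)
    (Ex : Fin N → Fin p2 → ℝ) : Matrix (Fin N) (Fin p1 ⊕ Fin p2) ℝ :=
  X + Matrix.of fun i j => Sum.elim (fun _ => (0 : ℝ)) (fun k => Ex i k) j

/-- All the noise entries of `E`, `ε`, `Ex` gathered as a single family. -/
def noiseFam {Ωs : Type*} {N p2 : ℕ} (E ε : Ωs → Fin N → ℝ)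
    (Ex : Ωs → Fin N → Fin p2 → ℝ) :
    (Fin N ⊕ Fin N ⊕ Fin N × Fin p2) → Ωs → ℝ :=
  fun z ω => Sum.elim (fun i => E ω i) (Sum.elim (fun i => ε ω i) (fun q => Ex ω q.1 q.2)) z


end PSAR

section DotProductMulVec

variable {m n : Type*} [Fintype m] [Fintype n]

noncomputable def Matrix.dotProductMulVecCLM (v : m → ℝ) (w : n → ℝ) :
    Matrix m n ℝ →L[ℝ] ℝ :=
  LinearMap.toContinuousLinearMap
    { toFun := fun M => v ⬝ᵥ (M *ᵥ w)
      map_add' := fun M M' => by simp [add_mulVec]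
      map_smul' := fun c M => by simp [smul_mulVec] }

attribute [local instance] Matrix.linftyOpNormedAddCommGroup Matrix.linftyOpNormedSpace

theorem HasDerivAt.dotProduct_mulVec {M : ℝ → Matrix m n ℝ} {M' : Matrix m n ℝ} {t : ℝ}
    (hM : HasDerivAt M M' t) (v : m → ℝ) (w : n → ℝ) :
    HasDerivAt (fun t => v ⬝ᵥ (M t *ᵥ w)) (v ⬝ᵥ (M' *ᵥ w)) t :=
  (dotProductMulVecCLM v w).hasFDerivAt.comp_hasDerivAt t hM

end DotProductMulVec

namespace Matrix

theorem dotProduct_mulVec_self_eq_sum {R m : Type*} [CommSemiring R] [Fintype m]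
    (M : Matrix m m R) (u : m → R) : u ⬝ᵥ (M *ᵥ u) = ∑ i, ∑ j, M i j * (u j * u i) := by
  simp only [dotProduct, mulVec, Finset.mul_sum]
  exact Finset.sum_congr rfl fun i _ => Finset.sum_congr rfl fun j _ => by ring

theorem sub_mul_diagonal_mul_transpose_sub {R m ι : Type*} [CommRing R] [Fintype ι]
    [DecidableEq ι] {A B : Matrix m ι R} {d : ι → R} (h : A * diagonal d * Bᵀ = 0) :
    (A - B) * diagonal d * (A - B)ᵀ = A * diagonal d * Aᵀ + B * diagonal d * Bᵀ := by
  have h' : B * diagonal d * Aᵀ = 0 := by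
    simpa [transpose_mul, Matrix.mul_assoc] using congrArg transpose h
  rw [transpose_sub, Matrix.sub_mul, Matrix.sub_mul, Matrix.mul_sub, Matrix.mul_sub, h, h']
  abel

section ShiftedInverse

variable {n : Type*} [DecidableEq n] {A : Matrix n n ℝ} {s : ℝ}

theorem PosSemidef.posDef_smul_one_add (hA : A.PosSemidef) (hs : 0 < s) :
    (s • (1 : Matrix n n ℝ) + A).PosDef := by
  refine PosDef.add_posSemidef ?_ hA
  rw [smul_one_eq_diagonal]
  exact posDef_diagonal_iff.mpr fun _ => hs

variable [Fintype n]

theorem contDiff_det_smul_one_add (A : Matrix n n ℝ) (k : WithTop ℕ∞) :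
    ContDiff ℝ k fun t : ℝ => (t • (1 : Matrix n n ℝ) + A).det := by
  have h : ∀ t : ℝ, (t • (1 : Matrix n n ℝ) + A).det = (charpoly (-A)).aeval t := fun t => by
    simp [eval_charpoly, smul_one_eq_diagonal]
  simpa only [h] using (charpoly (-A)).contDiff_aeval k

-- Any norm inducing the product topology would do; the op norm makes matrices a normed algebra.
attribute [local instance] Matrix.linftyOpNormedAddCommGroup Matrix.linftyOpNormedSpace
  Matrix.linftyOpNormedRing Matrix.linftyOpNormedAlgebra

theorem hasDerivAt_inv_smul_one_add (h : IsUnit (s • (1 : Matrix n n ℝ) + A)) :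
    HasDerivAt (fun t => (t • (1 : Matrix n n ℝ) + A)⁻¹)
      (-((s • 1 + A)⁻¹ * (s • 1 + A)⁻¹)) s := by
  have hlin : HasDerivAt (fun t : ℝ => t • (1 : Matrix n n ℝ) + A) 1 s :=
    (((hasDerivAt_id s).smul_const (1 : Matrix n n ℝ)).add_const A).congr_deriv (one_smul ℝ 1)
  have hu : (↑h.unit⁻¹ : Matrix n n ℝ) = (s • 1 + A)⁻¹ := by
    rw [← Ring.inverse_unit, h.unit_spec, nonsing_inv_eq_ringInverse]
  have := (hasFDerivAt_ringInverse (𝕜 := ℝ) h.unit).comp_hasDerivAt_of_eq s hlin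
    h.unit_spec.symm
  simp only [Function.comp_def, ← nonsing_inv_eq_ringInverse, hu] at this
  exact this.congr_deriv (by simp)

theorem contDiffAt_dotProduct_inv_smul_one_add_mulVec
    (h : IsUnit (s • (1 : Matrix n n ℝ) + A)) (v w : n → ℝ) (k : WithTop ℕ∞) :
    ContDiffAt ℝ k (fun t => v ⬝ᵥ ((t • (1 : Matrix n n ℝ) + A)⁻¹ *ᵥ w)) s := by
  have hlin : ContDiff ℝ k fun t : ℝ => t • (1 : Matrix n n ℝ) + A := by fun_prop
  have hinv := contDiffAt_ringInverse ℝ (n := k) h.unit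
  rw [h.unit_spec] at hinv
  have := (dotProductMulVecCLM v w).contDiff.contDiffAt.comp s (hinv.comp s hlin.contDiffAt)
  simp only [Function.comp_def, ← nonsing_inv_eq_ringInverse] at this
  exact this

theorem deriv_deriv_dotProduct_inv_smul_one_add_mulVec (hA : A.PosSemidef) (hs : 0 < s)
    (v w : n → ℝ) :
    deriv (deriv fun t => v ⬝ᵥ ((t • (1 : Matrix n n ℝ) + A)⁻¹ *ᵥ w)) s
      = 2 * (v ⬝ᵥ (((s • 1 + A)⁻¹ * (s • 1 + A)⁻¹ * (s • 1 + A)⁻¹) *ᵥ w)) := by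
  have hunit : ∀ t : ℝ, 0 < t → IsUnit (t • (1 : Matrix n n ℝ) + A) :=
    fun t ht => (hA.posDef_smul_one_add ht).isUnit
  have hderiv : deriv (fun t => v ⬝ᵥ ((t • (1 : Matrix n n ℝ) + A)⁻¹ *ᵥ w))
      =ᶠ[nhds s] fun t => v ⬝ᵥ ((-((t • 1 + A)⁻¹ * (t • 1 + A)⁻¹)) *ᵥ w) :=
    Filter.eventuallyEq_of_mem (Ioi_mem_nhds hs) fun t ht =>
      ((hasDerivAt_inv_smul_one_add (hunit t ht)).dotProduct_mulVec v w).deriv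
  have hinv := hasDerivAt_inv_smul_one_add (hunit s hs)
  rw [hderiv.deriv_eq, ((hinv.fun_mul hinv).fun_neg.dotProduct_mulVec v w).deriv]
  simp only [neg_mul, mul_neg, neg_neg, neg_add, add_mulVec, dotProduct_add, mul_assoc]
  ring

end ShiftedInverse

end Matrix

namespace ProbabilityTheory

variable {Ω ι : Type*} [MeasurableSpace Ω] {μ : Measure Ω} {η : ι → Ω → ℝ}

theorem integral_mul_eq_zero_of_iIndepFun (hindep : iIndepFun η μ)
    (hmeas : ∀ z, AEStronglyMeasurable (η z) μ) (hmean : ∀ z, ∫ ω, η z ω ∂μ = 0) :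
    Pairwise fun z w => ∫ ω, η z ω * η w ω ∂μ = 0 := fun z w hzw => by
  dsimp only
  rw [(hindep.indepFun hzw).integral_fun_mul_eq_mul_integral (hmeas z) (hmeas w), hmean z,
    zero_mul]

variable [Fintype ι]

theorem integral_dotProduct_mul_dotProduct (hL2 : ∀ z, MemLp (η z) 2 μ)
    (huncorr : Pairwise fun z w => ∫ ω, η z ω * η w ω ∂μ = 0) (c d : ι → ℝ) :
    ∫ ω, (c ⬝ᵥ fun z => η z ω) * (d ⬝ᵥ fun z => η z ω) ∂μ
      = ∑ z, c z * d z * ∫ ω, η z ω ^ 2 ∂μ := by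
  have hint : ∀ z w, Integrable (fun ω => η z ω * η w ω) μ :=
    fun z w => (hL2 z).integrable_mul (hL2 w)
  have hexpand : ∀ ω, (c ⬝ᵥ fun z => η z ω) * (d ⬝ᵥ fun z => η z ω)
      = ∑ z, ∑ w, c z * d w * (η z ω * η w ω) := fun ω => by
    simp only [dotProduct, Finset.sum_mul_sum]
    exact Finset.sum_congr rfl fun z _ => Finset.sum_congr rfl fun w _ => by ring
  simp_rw [hexpand]
  rw [integral_finsetSum _ fun z _ => integrable_finsetSum _ fun w _ => (hint z w).const_mul _]
  refine Finset.sum_congr rfl fun z _ => ?_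
  rw [integral_finsetSum _ fun w _ => (hint z w).const_mul _, Finset.sum_eq_single z
    (fun w _ hwz => by rw [integral_const_mul, huncorr (Ne.symm hwz), mul_zero])
    (fun hz => absurd (Finset.mem_univ z) hz), integral_const_mul]
  simp only [sq]

variable {m : Type*}

theorem integrable_mulVec_mul_mulVec (hL2 : ∀ z, MemLp (η z) 2 μ) (C : Matrix m ι ℝ)
    (i j : m) :
    Integrable (fun ω => (C *ᵥ fun z => η z ω) i * (C *ᵥ fun z => η z ω) j) μ :=
  (memLp_finsetSum _ fun z _ => (hL2 z).const_mul (C i z)).integrable_mul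
    (memLp_finsetSum _ fun z _ => (hL2 z).const_mul (C j z))

theorem integral_mulVec_mul_mulVec [DecidableEq ι] (hL2 : ∀ z, MemLp (η z) 2 μ)
    (huncorr : Pairwise fun z w => ∫ ω, η z ω * η w ω ∂μ = 0) (C : Matrix m ι ℝ) (i j : m) :
    ∫ ω, (C *ᵥ fun z => η z ω) i * (C *ᵥ fun z => η z ω) j ∂μ
      = (C * diagonal (fun z => ∫ ω, η z ω ^ 2 ∂μ) * Cᵀ) i j := by
  change ∫ ω, ((fun z => C i z) ⬝ᵥ fun z => η z ω) * ((fun z => C j z) ⬝ᵥ fun z => η z ω) ∂μ = _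
  rw [integral_dotProduct_mul_dotProduct hL2 huncorr, mul_apply]
  simp only [mul_diagonal, transpose_apply]
  exact Finset.sum_congr rfl fun z _ => by ring

variable [Fintype m]

theorem integrable_dotProduct_mulVec_mulVec (hL2 : ∀ z, MemLp (η z) 2 μ) (C : Matrix m ι ℝ)
    (M : Matrix m m ℝ) :
    Integrable (fun ω => (C *ᵥ fun z => η z ω) ⬝ᵥ (M *ᵥ (C *ᵥ fun z => η z ω))) μ := by
  simp_rw [dotProduct_mulVec_self_eq_sum]
  exact integrable_finsetSum _ fun i _ => integrable_finsetSum _ fun j _ =>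
    (integrable_mulVec_mul_mulVec hL2 C j i).const_mul (M i j)

theorem integral_dotProduct_mulVec_mulVec [DecidableEq ι] (hL2 : ∀ z, MemLp (η z) 2 μ)
    (huncorr : Pairwise fun z w => ∫ ω, η z ω * η w ω ∂μ = 0)
    (C : Matrix m ι ℝ) (M : Matrix m m ℝ) :
    ∫ ω, (C *ᵥ fun z => η z ω) ⬝ᵥ (M *ᵥ (C *ᵥ fun z => η z ω)) ∂μ
      = trace (M * (C * diagonal (fun z => ∫ ω, η z ω ^ 2 ∂μ) * Cᵀ)) := by
  set u : Ω → m → ℝ := fun ω => C *ᵥ fun z => η z ω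
  have hint : ∀ i j, Integrable (fun ω => u ω i * u ω j) μ :=
    integrable_mulVec_mul_mulVec hL2 C
  calc ∫ ω, u ω ⬝ᵥ (M *ᵥ u ω) ∂μ
      = ∫ ω, ∑ i, ∑ j, M i j * (u ω j * u ω i) ∂μ := by
        simp_rw [dotProduct_mulVec_self_eq_sum]
    _ = ∑ i, ∑ j, M i j * ∫ ω, u ω j * u ω i ∂μ := by
        rw [integral_finsetSum (f := fun i ω => ∑ j, M i j * (u ω j * u ω i)) _
          fun i _ => integrable_finsetSum _ fun j _ => (hint j i).const_mul _]
        refine Finset.sum_congr rfl fun i _ => ?_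
        rw [integral_finsetSum (f := fun j ω => M i j * (u ω j * u ω i)) _
          fun j _ => (hint j i).const_mul _]
        simp only [integral_const_mul]
    _ = _ := by
        simp only [u, integral_mulVec_mul_mulVec hL2 huncorr, trace, diag_apply, mul_apply]

end ProbabilityTheory

namespace PSAR

theorem deriv_deriv_nll {N p1 p2 : ℕ} {W : Matrix (Fin N) (Fin N) ℝ} {lam2 σ2 : ℝ}
    (hlam : 0 ≤ lam2) (hσ : 0 < σ2) (X : Matrix (Fin N) (Fin p1 ⊕ Fin p2) ℝ) (Ys : Fin N → ℝ)
    (ρ : ℝ) (β : Fin p1 ⊕ Fin p2 → ℝ) :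
    deriv (deriv fun s => nll W lam2 X Ys ρ β s) σ2
      = deriv (deriv fun s => Real.log (Omat W lam2 ρ s).det) σ2 / 2
        + (Smat W ρ *ᵥ Ys - X *ᵥ β) ⬝ᵥ
          (((Omat W lam2 ρ σ2)⁻¹ * (Omat W lam2 ρ σ2)⁻¹ * (Omat W lam2 ρ σ2)⁻¹) *ᵥ
            (Smat W ρ *ᵥ Ys - X *ᵥ β)) := by
  set A := lam2 • (Smat W ρ * (Smat W ρ)ᵀ)
  set r := Smat W ρ *ᵥ Ys - X *ᵥ β
  have hA : A.PosSemidef := by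
    simpa using (posSemidef_self_mul_conjTranspose (Smat W ρ)).smul hlam
  have hΩ := hA.posDef_smul_one_add hσ
  have hsplit : (fun s => nll W lam2 X Ys ρ β s) = fun s => -Real.log (Smat W ρ).det
      + ((1 / 2) * Real.log (s • (1 : Matrix (Fin N) (Fin N) ℝ) + A).det
        + (1 / 2) * (r ⬝ᵥ ((s • 1 + A)⁻¹ *ᵥ r))) := by
    funext s
    simp only [nll, Omat, add_assoc, A, r]
  have hlog : ContDiffAt ℝ 2
      (fun s => Real.log (s • (1 : Matrix (Fin N) (Fin N) ℝ) + A).det) σ2 :=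
    (contDiff_det_smul_one_add A 2).contDiffAt.log hΩ.det_pos.ne'
  have hquad : ContDiffAt ℝ 2
      (fun s => r ⬝ᵥ ((s • (1 : Matrix (Fin N) (Fin N) ℝ) + A)⁻¹ *ᵥ r)) σ2 :=
    contDiffAt_dotProduct_inv_smul_one_add_mulVec hΩ.isUnit r r 2
  have h2 : ∀ f : ℝ → ℝ, deriv (deriv f) = iteratedDeriv 2 f := fun f => by
    simp [iteratedDeriv_eq_iterate]
  rw [h2, hsplit, iteratedDeriv_const_add two_pos,
    iteratedDeriv_fun_add (n := 2) (contDiffAt_const.mul hlog) (contDiffAt_const.mul hquad),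
    iteratedDeriv_const_mul_field, iteratedDeriv_const_mul_field, ← h2, ← h2,
    deriv_deriv_dotProduct_inv_smul_one_add_mulVec hA hσ]
  simp only [Omat, A]
  ring

section NoiseCoefficients

noncomputable def residualNoiseCoef {N : ℕ} (p2 : ℕ) (S : Matrix (Fin N) (Fin N) ℝ) :
    Matrix (Fin N) (Fin N ⊕ Fin N ⊕ Fin N × Fin p2) ℝ :=
  fromCols 1 (fromCols S 0)

def covariateNoiseCoef (N : ℕ) {p2 : ℕ} (b : Fin p2 → ℝ) :
    Matrix (Fin N) (Fin N ⊕ Fin N ⊕ Fin N × Fin p2) ℝ :=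
  fromCols 0 (fromCols 0 (of fun i q => if q.1 = i then b q.2 else 0))

variable {N p2 : ℕ}

theorem residualNoiseCoef_mulVec (S : Matrix (Fin N) (Fin N) ℝ) (e u : Fin N → ℝ)
    (v : Fin N × Fin p2 → ℝ) :
    residualNoiseCoef p2 S *ᵥ Sum.elim e (Sum.elim u v) = e + S *ᵥ u := by
  simp [residualNoiseCoef, fromCols_mulVec, Function.comp_def]

theorem covariateNoiseCoef_mulVec (b : Fin p2 → ℝ) (e u : Fin N → ℝ) (v : Fin N × Fin p2 → ℝ) :
    covariateNoiseCoef N b *ᵥ Sum.elim e (Sum.elim u v) = fun i => ∑ k, b k * v (i, k) := by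
  ext i
  simp [covariateNoiseCoef, mulVec, dotProduct, Fintype.sum_prod_type]

variable (d : Fin N ⊕ Fin N ⊕ Fin N × Fin p2 → ℝ)

theorem residualNoiseCoef_mul_diagonal_mul_covariateNoiseCoef_transpose
    (S : Matrix (Fin N) (Fin N) ℝ) (b : Fin p2 → ℝ) :
    residualNoiseCoef p2 S * diagonal d * (covariateNoiseCoef N b)ᵀ
      = (0 : Matrix (Fin N) (Fin N) ℝ) := by
  ext i j
  simp [residualNoiseCoef, covariateNoiseCoef, mul_apply, Fintype.sum_sum_type]

theorem covariateNoiseCoef_mul_diagonal_mul_transpose {lamx2 : ℝ}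
    (hd : ∀ q, d (Sum.inr (Sum.inr q)) = lamx2) (b : Fin p2 → ℝ) :
    covariateNoiseCoef N b * diagonal d * (covariateNoiseCoef N b)ᵀ
      = (lamx2 * ∑ k, b k ^ 2) • (1 : Matrix (Fin N) (Fin N) ℝ) := by
  ext i j
  rw [mul_apply]
  simp only [covariateNoiseCoef, mul_diagonal, Fintype.sum_sum_type, Fintype.sum_prod_type,
    hd]
  by_cases hij : i = j
  · subst hij
    simp [Finset.mul_sum, sq, mul_comm, mul_left_comm]
  · simp [hij, Ne.symm hij]

end NoiseCoefficients

theorem noiseFam_apply {Ωs : Type*} {N p2 : ℕ} (E ε : Ωs → Fin N → ℝ)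
    (Ex : Ωs → Fin N → Fin p2 → ℝ) (ω : Ωs) :
    (fun z => noiseFam E ε Ex z ω) = Sum.elim (E ω) (Sum.elim (ε ω) fun q => Ex ω q.1 q.2) :=
  rfl

theorem Smat_mulVec_Yobs_sub {N p1 p2 : ℕ} {W : Matrix (Fin N) (Fin N) ℝ} {ρ0 : ℝ}
    (hS : IsUnit (Smat W ρ0).det) (X : Matrix (Fin N) (Fin p1 ⊕ Fin p2) ℝ)
    (β0 : Fin p1 ⊕ Fin p2 → ℝ) (e u : Fin N → ℝ) :
    Smat W ρ0 *ᵥ Yobs W ρ0 X β0 e u - X *ᵥ β0 = e + Smat W ρ0 *ᵥ u := by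
  rw [Yobs, mulVec_add, mulVec_mulVec, mul_nonsing_inv _ hS, one_mulVec]
  abel

theorem Xobs_mulVec {N p1 p2 : ℕ} (X : Matrix (Fin N) (Fin p1 ⊕ Fin p2) ℝ)
    (Ex : Fin N → Fin p2 → ℝ) (β : Fin p1 ⊕ Fin p2 → ℝ) :
    Xobs X Ex *ᵥ β = X *ᵥ β + fun i => ∑ k, β (Sum.inr k) * Ex i k := by
  rw [Xobs, add_mulVec]
  congr 1
  ext i
  simp [mulVec, dotProduct, Fintype.sum_sum_type, mul_comm]

theorem statement_6_general
    {Ωs : Type*} [MeasurableSpace Ωs] (μ : Measure Ωs) [IsProbabilityMeasure μ]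
    (N p1 p2 : ℕ)
    (W : Matrix (Fin N) (Fin N) ℝ)
    (X : Matrix (Fin N) (Fin p1 ⊕ Fin p2) ℝ)
    (ρ0 : ℝ) (β0 : Fin p1 ⊕ Fin p2 → ℝ) (σ02 lam2 lamx2 : ℝ)
    (hσ : 0 < σ02) (hlam : 0 < lam2)
    (hS0 : 0 < (Smat W ρ0).det)
    (E ε : Ωs → Fin N → ℝ) (Ex : Ωs → Fin N → Fin p2 → ℝ)
    (hindep : iIndepFun (noiseFam E ε Ex) μ)
    (hmom : ∀ z, MemLp (noiseFam E ε Ex z) 4 μ)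
    (hmean : ∀ z, ∫ ω, noiseFam E ε Ex z ω ∂μ = 0)
    (hExvar : ∀ i j, ∫ ω, (Ex ω i j) ^ 2 ∂μ = lamx2) :
    (∫ ω, deriv (deriv (fun s =>
          nll W lam2 (Xobs X (Ex ω)) (Yobs W ρ0 X β0 (E ω) (ε ω)) ρ0 β0 s)) σ02 ∂μ)
      - (∫ ω, deriv (deriv (fun s =>
          nll W lam2 X (Yobs W ρ0 X β0 (E ω) (ε ω)) ρ0 β0 s)) σ02 ∂μ)
      = lamx2 * (∑ k, β0 (Sum.inr k) ^ 2) *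
          Matrix.trace ((Omat W lam2 ρ0 σ02)⁻¹ * (Omat W lam2 ρ0 σ02)⁻¹ *
            (Omat W lam2 ρ0 σ02)⁻¹)
  := by
  have hL2 : ∀ z, MemLp (noiseFam E ε Ex z) 2 μ :=
    fun z => (hmom z).mono_exponent (by norm_num)
  have huncorr := integral_mul_eq_zero_of_iIndepFun hindep
    (fun z => (hmom z).aestronglyMeasurable) hmean
  have hres : ∀ ω, Smat W ρ0 *ᵥ Yobs W ρ0 X β0 (E ω) (ε ω) - X *ᵥ β0
      = residualNoiseCoef p2 (Smat W ρ0) *ᵥ fun z => noiseFam E ε Ex z ω := fun ω => by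
    rw [Smat_mulVec_Yobs_sub hS0.ne'.isUnit, noiseFam_apply, residualNoiseCoef_mulVec]
  have hres' : ∀ ω, Smat W ρ0 *ᵥ Yobs W ρ0 X β0 (E ω) (ε ω) - Xobs X (Ex ω) *ᵥ β0
      = (residualNoiseCoef p2 (Smat W ρ0) - covariateNoiseCoef N fun k => β0 (Sum.inr k)) *ᵥ
          fun z => noiseFam E ε Ex z ω := fun ω => by
    rw [Xobs_mulVec, ← sub_sub, hres, sub_mulVec, noiseFam_apply, covariateNoiseCoef_mulVec]
  simp_rw [deriv_deriv_nll hlam.le hσ, hres, hres']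
  rw [integral_add (integrable_const _) (integrable_dotProduct_mulVec_mulVec hL2 _ _),
    integral_add (integrable_const _) (integrable_dotProduct_mulVec_mulVec hL2 _ _),
    integral_dotProduct_mulVec_mulVec hL2 huncorr, integral_dotProduct_mulVec_mulVec hL2 huncorr,
    sub_mul_diagonal_mul_transpose_sub
      (residualNoiseCoef_mul_diagonal_mul_covariateNoiseCoef_transpose _ _ _),
    covariateNoiseCoef_mul_diagonal_mul_transpose _ (fun q => hExvar q.1 q.2)]
  simp only [Matrix.mul_add, trace_add, Matrix.mul_smul, trace_smul, Matrix.mul_one, smul_eq_mul]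
  ring

theorem statement_6
    {Ωs : Type*} [MeasurableSpace Ωs] (μ : Measure Ωs) [IsProbabilityMeasure μ]
    (N p1 p2 : ℕ) (hN : 0 < N) (hp1 : 0 < p1) (hp2 : 0 < p2)
    (W : Matrix (Fin N) (Fin N) ℝ) (hW : ∀ i, W i i = 0)
    (X : Matrix (Fin N) (Fin p1 ⊕ Fin p2) ℝ)
    (ρ0 : ℝ) (β0 : Fin p1 ⊕ Fin p2 → ℝ) (σ02 lam2 lamx2 : ℝ)
    (hσ : 0 < σ02) (hlam : 0 < lam2) (hlamx : 0 < lamx2)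
    (hS0 : 0 < (Smat W ρ0).det)
    (E ε : Ωs → Fin N → ℝ) (Ex : Ωs → Fin N → Fin p2 → ℝ)
    (hindep : iIndepFun (noiseFam E ε Ex) μ)
    (hmom : ∀ z, MemLp (noiseFam E ε Ex z) 4 μ)
    (hmean : ∀ z, ∫ ω, noiseFam E ε Ex z ω ∂μ = 0)
    (hEvar : ∀ i, ∫ ω, (E ω i) ^ 2 ∂μ = σ02)
    (hepsvar : ∀ i, ∫ ω, (ε ω i) ^ 2 ∂μ = lam2)
    (hExvar : ∀ i j, ∫ ω, (Ex ω i j) ^ 2 ∂μ = lamx2) :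
    (∫ ω, deriv (deriv (fun s =>
          nll W lam2 (Xobs X (Ex ω)) (Yobs W ρ0 X β0 (E ω) (ε ω)) ρ0 β0 s)) σ02 ∂μ)
      - (∫ ω, deriv (deriv (fun s =>
          nll W lam2 X (Yobs W ρ0 X β0 (E ω) (ε ω)) ρ0 β0 s)) σ02 ∂μ)
      = lamx2 * (∑ k, β0 (Sum.inr k) ^ 2) *
          Matrix.trace ((Omat W lam2 ρ0 σ02)⁻¹ * (Omat W lam2 ρ0 σ02)⁻¹ *
            (Omat W lam2 ρ0 σ02)⁻¹) :=
  statement_6_general μ N p1 p2 W X ρ0 β0 σ02 lam2 lamx2 hσ hlam hS0 E ε Ex hindep hmom hmean hExvar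

end PSAR
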